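/- arXiv:2001.00701 — 2 statements merged into one kernel-verified Lean document; each statement's English description precedes it below -/
import Mathlib

section
/- Let δ ∈ ℂ. For 𝔰𝔩₂, the Casimir operator on the tensor product L₁ ⊗ E of the 2-dimensional irreducible module L₁ with a module E on which the Casimir acts by δ and which has one-dimensional weight spaces, has eigenvalues δ± = ½(2δ+1) ± √(2δ+1) on each weight space. In particular, for δ = −3/8 the eigenvalues are −3/8 and 5/8. -/
/-!
Since `e`, `h`, `f` act on `L₁ ⊗ E` as derivations, the Casimir of the tensor product is
`Ω ⊗ 1 + 1 ⊗ Ω + 2 (e ⊗ f + f ⊗ e) + h ⊗ h`. The Casimir acts on `L₁` by `3/2` and on `E` by `δ`,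
so on the weight space spanned by `x ⊗ w k` and `y ⊗ w (k + 1)` it acts by a `2 × 2` matrix with
trace `2δ + 1` and determinant `δ² - δ - 3/4`, whose eigenvalues are `δ±`.
-/

open TensorProduct LieModule

section Casimir

variable (K : Type*) {L : Type*} [Field K] [LieRing L] [LieAlgebra K L]

def sl2Casimir (M : Type*) [AddCommGroup M] [Module K M] [LieRingModule L M] [LieModule K L M]
    (e h f : L) : Module.End K M :=
  toEnd K L M e * toEnd K L M f + (1 / 2 : K) • (toEnd K L M h * toEnd K L M h)
    + toEnd K L M f * toEnd K L M e

variable {K} {M N : Type*} [AddCommGroup M] [Module K M] [LieRingModule L M] [LieModule K L M]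
  [AddCommGroup N] [Module K N] [LieRingModule L N] [LieModule K L N]

@[simp]
lemma sl2Casimir_apply (e h f : L) (m : M) :
    sl2Casimir K M e h f m = ⁅e, ⁅f, m⁆⁆ + (1 / 2 : K) • ⁅h, ⁅h, m⁆⁆ + ⁅f, ⁅e, m⁆⁆ := by
  simp [sl2Casimir]

lemma sl2Casimir_tmul [CharZero K] (e h f : L) (m : M) (n : N) :
    sl2Casimir K (M ⊗[K] N) e h f (m ⊗ₜ n)
      = sl2Casimir K M e h f m ⊗ₜ n + m ⊗ₜ sl2Casimir K N e h f n
      + (2 : K) • (⁅e, m⁆ ⊗ₜ ⁅f, n⁆ + ⁅f, m⁆ ⊗ₜ ⁅e, n⁆) + ⁅h, m⁆ ⊗ₜ ⁅h, n⁆ := by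
  simp only [sl2Casimir_apply, LieModule.lie_tmul_right, lie_add, add_tmul, tmul_add, smul_add,
    tmul_smul, ← smul_tmul']
  module

end Casimir

lemma LinearIndependent.pair_tmul {R M N ι κ : Type*} [CommRing R] [IsDomain R]
    [AddCommGroup M] [Module R M] [AddCommGroup N] [Module R N] {v : ι → M} {w : κ → N}
    (hv : LinearIndependent R v) (hw : LinearIndependent R w) {i i' : ι} (hi : i ≠ i')
    (j j' : κ) : LinearIndependent R ![v i ⊗ₜ[R] w j, v i' ⊗ₜ[R] w j'] := by
  have hinj : Function.Injective ![(i, j), (i', j')] := by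
    intro a b
    fin_cases a <;> fin_cases b <;> simp [hi, hi.symm]
  convert (hv.tmul_of_isDomain hw).comp _ hinj using 1
  ext a
  fin_cases a <;> rfl

lemma Module.End.hasEigenvector_of_apply_pair {R M : Type*} [CommRing R] [AddCommGroup M]
    [Module R M] {T : Module.End R M} {a b : M} (hab : LinearIndependent R ![a, b])
    {α β γ c ε : R} (hc : c ≠ 0) (ha : T a = α • a + γ • b) (hb : T b = c • a + β • b)
    (hε : (ε - α) * (ε - β) = c * γ) :
    T.HasEigenvector ε (c • a + (ε - α) • b) := by
  refine ⟨Module.End.mem_eigenspace_iff.mpr ?_,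
    fun h0 ↦ hc (LinearIndependent.pair_iff.mp hab c _ h0).1⟩
  rw [map_add, map_smul, map_smul, ha, hb]
  linear_combination (norm := module) -hε • b

section Sl2Modules

variable {K L V E : Type*} [Field K] [CharZero K] [LieRing L] [LieAlgebra K L]
  [AddCommGroup V] [Module K V] [LieRingModule L V] [LieModule K L V]
  [AddCommGroup E] [Module K E] [LieRingModule L E] [LieModule K L E] {e h f : L}

lemma sl2Casimir_apply_eq_of_highest {x y : V} (hhx : ⁅h, x⁆ = x) (hex : ⁅e, x⁆ = 0)
    (hfx : ⁅f, x⁆ = y) (hey : ⁅e, y⁆ = x) : sl2Casimir K V e h f x = (3 / 2 : K) • x := by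
  rw [sl2Casimir_apply, hfx, hey, hhx, hhx, hex, lie_zero]
  module

lemma sl2Casimir_apply_eq_of_lowest {x y : V} (hhy : ⁅h, y⁆ = (-1 : K) • y) (hfy : ⁅f, y⁆ = 0)
    (hey : ⁅e, y⁆ = x) (hfx : ⁅f, x⁆ = y) : sl2Casimir K V e h f y = (3 / 2 : K) • y := by
  rw [sl2Casimir_apply, hfy, lie_zero, hhy, lie_smul, hhy, hey, hfx]
  module

variable {δ lam : K} {w : ℤ → E}

lemma sl2Casimir_apply_weightVector (hwh : ∀ k : ℤ, ⁅h, w k⁆ = (lam + 2 * k) • w k)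
    (hwf : ∀ k : ℤ, ⁅f, w k⁆ = w (k - 1))
    (hwe : ∀ k : ℤ, ⁅e, w k⁆
      = ((1 / 2 : K) * (δ - (1 / 2 : K) * (lam + 2 * k + 2) * (lam + 2 * k))) • w (k + 1))
    (k : ℤ) : sl2Casimir K E e h f (w k) = δ • w k := by
  simp only [sl2Casimir_apply, hwf, hwe, hwh, lie_smul, sub_add_cancel, add_sub_cancel_right]
  push_cast
  module

variable {x y : V} {u u' : E} {μ c : K}

lemma sl2Casimir_tmul_highest (hhx : ⁅h, x⁆ = x) (hex : ⁅e, x⁆ = 0) (hfx : ⁅f, x⁆ = y)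
    (hΩx : sl2Casimir K V e h f x = (3 / 2 : K) • x) (hhu : ⁅h, u⁆ = μ • u) (heu : ⁅e, u⁆ = c • u')
    (hΩu : sl2Casimir K E e h f u = δ • u) :
    sl2Casimir K (V ⊗[K] E) e h f (x ⊗ₜ u)
      = (δ + μ + 3 / 2) • (x ⊗ₜ u) + (2 * c) • (y ⊗ₜ u') := by
  rw [sl2Casimir_tmul, hΩx, hΩu, hex, hfx, hhx, heu, hhu]
  simp only [zero_tmul, zero_add, tmul_smul, ← smul_tmul']
  module

lemma sl2Casimir_tmul_lowest (hhy : ⁅h, y⁆ = (-1 : K) • y) (hey : ⁅e, y⁆ = x) (hfy : ⁅f, y⁆ = 0)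
    (hΩy : sl2Casimir K V e h f y = (3 / 2 : K) • y) (hhu' : ⁅h, u'⁆ = (μ + 2) • u')
    (hfu' : ⁅f, u'⁆ = u) (hΩu' : sl2Casimir K E e h f u' = δ • u') :
    sl2Casimir K (V ⊗[K] E) e h f (y ⊗ₜ u')
      = (2 : K) • (x ⊗ₜ u) + (δ - μ - 1 / 2) • (y ⊗ₜ u') := by
  rw [sl2Casimir_tmul, hΩy, hΩu', hey, hfy, hhy, hfu', hhu']
  simp only [zero_tmul, add_zero, tmul_smul, ← smul_tmul']
  module

end Sl2Modules

theorem sl2_casimir_eigenvalues_on_L1_tensor_relaxed_general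
    {L : Type*} [LieRing L] [LieAlgebra ℂ L]
    (e h f : L)
    (δ lam : ℂ)
    {V₁ : Type*} [AddCommGroup V₁] [Module ℂ V₁] [LieRingModule L V₁] [LieModule ℂ L V₁]
    (x y : V₁) (hxy : LinearIndependent ℂ ![x, y])
    (hhx : ⁅h, x⁆ = x) (hhy : ⁅h, y⁆ = (-1 : ℂ) • y)
    (hex : ⁅e, x⁆ = 0) (hfx : ⁅f, x⁆ = y) (hey : ⁅e, y⁆ = x) (hfy : ⁅f, y⁆ = 0)
    {E : Type*} [AddCommGroup E] [Module ℂ E] [LieRingModule L E] [LieModule ℂ L E]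
    (w : ℤ → E) (hw : LinearIndependent ℂ w)
    (hwh : ∀ k : ℤ, ⁅h, w k⁆ = (lam + 2 * k) • w k)
    (hwf : ∀ k : ℤ, ⁅f, w k⁆ = w (k - 1))
    (hwe : ∀ k : ℤ, ⁅e, w k⁆
      = ((1 / 2 : ℂ) * (δ - (1 / 2 : ℂ) * (lam + 2 * k + 2) * (lam + 2 * k))) • w (k + 1)) :
    (∀ s : ℂ, s ^ 2 = 2 * δ + 1 → ∀ k : ℤ,
      ∀ ε ∈ ({(1 / 2 : ℂ) * (2 * δ + 1) + s, (1 / 2 : ℂ) * (2 * δ + 1) - s} : Set ℂ),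
        ∃ t : TensorProduct ℂ V₁ E, t ≠ 0
          ∧ t ∈ Submodule.span ℂ ({x ⊗ₜ[ℂ] w k, y ⊗ₜ[ℂ] w (k + 1)} : Set (TensorProduct ℂ V₁ E))
          ∧ ⁅e, ⁅f, t⁆⁆ + (1 / 2 : ℂ) • ⁅h, ⁅h, t⁆⁆ + ⁅f, ⁅e, t⁆⁆ = ε • t)
    ∧ (δ = -3/8 → ∀ s : ℂ, s ^ 2 = 2 * δ + 1 →
        ({(1 / 2 : ℂ) * (2 * δ + 1) + s, (1 / 2 : ℂ) * (2 * δ + 1) - s} : Set ℂ)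
          = {-3/8, 5/8}) := by
  have hΩw := sl2Casimir_apply_weightVector hwh hwf hwe
  refine ⟨fun s hs k ε hε ↦ ?_, ?_⟩
  · have hhw : ⁅h, w (k + 1)⁆ = (lam + 2 * k + 2) • w (k + 1) := by
      rw [hwh]; push_cast; ring_nf
    have hfw : ⁅f, w (k + 1)⁆ = w k := by rw [hwf, add_sub_cancel_right]
    have hchar : (ε - (δ + (lam + 2 * k) + 3 / 2)) * (ε - (δ - (lam + 2 * k) - 1 / 2))
        = 2 * (2 * (1 / 2 * (δ - 1 / 2 * (lam + 2 * k + 2) * (lam + 2 * k)))) := by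
      rcases hε with rfl | rfl <;> linear_combination hs
    have hvec := Module.End.hasEigenvector_of_apply_pair
      (hxy.pair_tmul hw zero_ne_one k (k + 1)) two_ne_zero
      (sl2Casimir_tmul_highest hhx hex hfx (sl2Casimir_apply_eq_of_highest hhx hex hfx hey)
        (hwh k) (hwe k) (hΩw k))
      (sl2Casimir_tmul_lowest hhy hey hfy (sl2Casimir_apply_eq_of_lowest hhy hfy hey hfx)
        hhw hfw (hΩw (k + 1))) hchar
    refine ⟨_, hvec.2, ?_, by simpa using hvec.apply_eq_smul⟩
    exact Submodule.add_mem _ (Submodule.smul_mem _ _ (Submodule.subset_span (by simp)))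
      (Submodule.smul_mem _ _ (Submodule.subset_span (by simp)))
  · rintro rfl s hs
    obtain rfl | rfl : s = 1 / 2 ∨ s = -(1 / 2) :=
      sq_eq_sq_iff_eq_or_eq_neg.mp (by rw [hs]; norm_num)
    all_goals norm_num [Set.pair_comm]

/-- **Example 5.6.** Let `δ ∈ ℂ`.  For `𝔰𝔩₂` (elements `e`, `h`, `f` with the
standard relations), let `L₁` be the 2-dimensional irreducible module (basis `x`, `y`) and let
`E = E_{λ̄,δ}` be a weight module with one-dimensional weight spaces `ℂ · w k` of weights
`λ + 2k` (`k ∈ ℤ`), on which the Casimir acts by `δ`.  Then on each (2-dimensional) weight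
space of `L₁ ⊗ E`, spanned by `x ⊗ w k` and `y ⊗ w (k+1)`, the Casimir operator
`ef + ½h² + fe` has eigenvalues `δ± = ½(2δ+1) ± √(2δ+1)`.  In particular, for `δ = -3/8` the
eigenvalues are `-3/8` and `5/8`. -/
theorem sl2_casimir_eigenvalues_on_L1_tensor_relaxed
    {L : Type*} [LieRing L] [LieAlgebra ℂ L]
    (e h f : L)
    (hhe : ⁅h, e⁆ = (2 : ℂ) • e) (hhf : ⁅h, f⁆ = (-2 : ℂ) • f) (hef : ⁅e, f⁆ = h)
    (δ lam : ℂ)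
    {V₁ : Type*} [AddCommGroup V₁] [Module ℂ V₁] [LieRingModule L V₁] [LieModule ℂ L V₁]
    (x y : V₁) (hxy : LinearIndependent ℂ ![x, y])
    (hhx : ⁅h, x⁆ = x) (hhy : ⁅h, y⁆ = (-1 : ℂ) • y)
    (hex : ⁅e, x⁆ = 0) (hfx : ⁅f, x⁆ = y) (hey : ⁅e, y⁆ = x) (hfy : ⁅f, y⁆ = 0)
    {E : Type*} [AddCommGroup E] [Module ℂ E] [LieRingModule L E] [LieModule ℂ L E]
    (w : ℤ → E) (hw : LinearIndependent ℂ w)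
    (hwh : ∀ k : ℤ, ⁅h, w k⁆ = (lam + 2 * k) • w k)
    (hwf : ∀ k : ℤ, ⁅f, w k⁆ = w (k - 1))
    (hwe : ∀ k : ℤ, ⁅e, w k⁆
      = ((1 / 2 : ℂ) * (δ - (1 / 2 : ℂ) * (lam + 2 * k + 2) * (lam + 2 * k))) • w (k + 1)) :
    (∀ s : ℂ, s ^ 2 = 2 * δ + 1 → ∀ k : ℤ,
      ∀ ε ∈ ({(1 / 2 : ℂ) * (2 * δ + 1) + s, (1 / 2 : ℂ) * (2 * δ + 1) - s} : Set ℂ),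
        ∃ t : TensorProduct ℂ V₁ E, t ≠ 0
          ∧ t ∈ Submodule.span ℂ ({x ⊗ₜ[ℂ] w k, y ⊗ₜ[ℂ] w (k + 1)} : Set (TensorProduct ℂ V₁ E))
          ∧ ⁅e, ⁅f, t⁆⁆ + (1 / 2 : ℂ) • ⁅h, ⁅h, t⁆⁆ + ⁅f, ⁅e, t⁆⁆ = ε • t)
    ∧ (δ = -3/8 → ∀ s : ℂ, s ^ 2 = 2 * δ + 1 →
        ({(1 / 2 : ℂ) * (2 * δ + 1) + s, (1 / 2 : ℂ) * (2 * δ + 1) - s} : Set ℂ)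
          = {-3/8, 5/8}) :=
  sl2_casimir_eigenvalues_on_L1_tensor_relaxed_general e h f δ lam x y hxy hhx hhy hex hfx hey hfy w
    hw hwh hwf hwe
end

section
/- Let p ∈ ℕ and λ ∈ ℂ with λ ∉ ℕ and p+λ ∉ ℕ, and let L_λ be the Verma (= irreducible highest-weight) 𝔰𝔩₂-module with highest weight λ. Then the eigenvalues of the Casimir operator ef + ½h² + fe on L_p ⊗ L_λ are exactly ½(p+λ−2k)(p+λ−2k+2) for 0 ≤ k ≤ p, and the Casimir acts diagonalizably, corresponding to the decomposition L_p ⊗ L_λ ≅ ⨁_{k=0}^{p} L_{p+λ−2k}. -/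
/-!
The Casimir operator `Ω` commutes with `f`, and on a vector of `h`-weight `μ` it acts as
`½μ(μ+2) + 2fe`. Put `x k = v k ⊗ w 0` and let `N k` be the span of the `f`-iterates of
`x 0, …, x (k-1)`. Since `e (x k)` is a multiple of `x (k-1)`, `(Ω - c k) (x k) ∈ N k`, where
`c k = ½(p+λ-2k)(p+λ-2k+2)`; as `Ω` commutes with `f`, `∏_{k<n} (Ω - c k)` kills `N n`, and
`N (p+1)` is the whole tensor product. Because `p + λ ∉ ℕ` the `c k` are pairwise distinct, so `Ω`
is diagonalizable with all eigenvalues among the `c k`. Conversely, for `k ≤ p` the operator `e`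
maps the `(k+1)`-dimensional span of the `v i ⊗ w (k-i)` into a `k`-dimensional space, so it has a
nonzero kernel vector there: a highest-weight vector of weight `p+λ-2k`, hence a `c k`-eigenvector.
-/

open Polynomial

section Eigenspaces

variable {K M ι : Type*} [Field K] [AddCommGroup M] [Module K M]

theorem Module.End.ker_aeval_prod_X_sub_C_le_iSup_eigenspace (f : Module.End K M) (c : ι → K)
    (s : Finset ι) (hc : Set.InjOn c s) :
    LinearMap.ker (aeval f (∏ i ∈ s, (X - C (c i)))) ≤ ⨆ μ, f.eigenspace μ := by
  classical
  induction s using Finset.induction_on with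
  | empty => simp [Module.End.one_eq_id]
  | insert a s ha ih =>
    have hcop : IsCoprime (X - C (c a)) (∏ i ∈ s, (X - C (c i))) :=
      IsCoprime.prod_right fun i hi => isCoprime_X_sub_C_of_isUnit_sub <| isUnit_iff_ne_zero.mpr <|
        sub_ne_zero.mpr fun h => ha (hc (by simp) (by simp [hi]) h ▸ hi)
    rw [Finset.prod_insert ha, ← sup_ker_aeval_eq_ker_aeval_mul_of_coprime f hcop]
    refine sup_le (fun x hx => ?_) (ih (hc.mono (by simp)))
    have hx : f x = c a • x := by
      simpa [sub_eq_zero, Module.algebraMap_end_apply] using hx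
    exact le_iSup (f.eigenspace ·) (c a) (Module.End.mem_eigenspace_iff.mpr hx)

theorem Module.End.iSup_eigenspace_eq_top_of_aeval_prod_X_sub_C_eq_zero (f : Module.End K M)
    (c : ι → K) (s : Finset ι) (hc : Set.InjOn c s) (h : aeval f (∏ i ∈ s, (X - C (c i))) = 0) :
    ⨆ μ, f.eigenspace μ = ⊤ :=
  top_le_iff.mp <| by
    simpa [h] using f.ker_aeval_prod_X_sub_C_le_iSup_eigenspace c s hc

theorem Module.End.HasEigenvalue.exists_eq_of_aeval_prod_X_sub_C_eq_zero {f : Module.End K M}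
    {μ : K} (hμ : f.HasEigenvalue μ) (c : ι → K) (s : Finset ι)
    (h : aeval f (∏ i ∈ s, (X - C (c i))) = 0) : ∃ i ∈ s, μ = c i := by
  obtain ⟨x, hx⟩ := hμ.exists_hasEigenvector
  have hroot := Module.End.aeval_apply_of_hasEigenvector (p := ∏ i ∈ s, (X - C (c i))) hx
  rw [h, LinearMap.zero_apply, eq_comm, smul_eq_zero] at hroot
  simpa [eval_prod, Finset.prod_eq_zero_iff, sub_eq_zero] using hroot.resolve_right hx.2

end Eigenspaces

theorem exists_ne_zero_mem_span_apply_eq_zero {K M M' : Type*} [Field K] [AddCommGroup M]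
    [Module K M] [AddCommGroup M'] [Module K M'] (φ : M →ₗ[K] M') {n : ℕ}
    (u : Fin (n + 1) → M) (hu : LinearIndependent K u) (g : Fin n → M')
    (hφu : ∀ i, φ (u i) ∈ Submodule.span K (Set.range g)) :
    ∃ y ∈ Submodule.span K (Set.range u), y ≠ 0 ∧ φ y = 0 := by
  classical
  have hdep : ¬ LinearIndependent K (φ ∘ u) := fun hli => by
    have hcard := linearIndependent_le_span_aux' (φ ∘ u) hli (Set.range g)
      (by rintro _ ⟨i, rfl⟩; exact hφu i)
    have := Fintype.card_range_le g
    simp only [Fintype.card_fin] at hcard this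
    omega
  obtain ⟨b, hb, i, hi⟩ := Fintype.not_linearIndependent_iff.mp hdep
  refine ⟨∑ i, b i • u i, Submodule.sum_mem _ fun i _ => Submodule.smul_mem _ _
    (Submodule.subset_span ⟨i, rfl⟩), fun h0 => hi (Fintype.linearIndependent_iff.mp hu b h0 i), ?_⟩
  simpa using hb

section IterateSpan

variable {K M : Type*} [Field K] [AddCommGroup M] [Module K M]

def iterateSpan (F : Module.End K M) (x : ℕ → M) (n : ℕ) : Submodule K M :=
  Submodule.span K {y | ∃ i < n, ∃ j : ℕ, (F ^ j) (x i) = y}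

variable {F : Module.End K M} {x : ℕ → M}

theorem pow_apply_mem_iterateSpan {n : ℕ} {y : M} (j : ℕ) (hy : y ∈ iterateSpan F x n) :
    (F ^ j) y ∈ iterateSpan F x n := by
  refine (Submodule.span_le.mpr ?_ : iterateSpan F x n ≤ (iterateSpan F x n).comap (F ^ j)) hy
  rintro _ ⟨i, hi, k, rfl⟩
  exact Submodule.subset_span ⟨i, hi, j + k, by rw [pow_add, Module.End.mul_apply]⟩

theorem iterateSpan_le_ker_aeval_prod {Ω : Module.End K M} (hΩF : Commute Ω F) (c : ℕ → K)
    (hx : ∀ k, Ω (x k) - c k • x k ∈ iterateSpan F x k) (n : ℕ) :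
    iterateSpan F x n ≤ LinearMap.ker (aeval Ω (∏ i ∈ Finset.range n, (X - C (c i)))) := by
  induction n with
  | zero =>
    refine Submodule.span_le.mpr ?_
    rintro _ ⟨i, hi, -⟩
    omega
  | succ n ih =>
    refine Submodule.span_le.mpr ?_
    rintro _ ⟨i, hi, j, rfl⟩
    rcases Nat.lt_succ_iff_lt_or_eq.mp hi with hi | rfl
    · have hy := ih (Submodule.subset_span ⟨i, hi, j, rfl⟩)
      rw [LinearMap.mem_ker] at hy
      simp [Finset.prod_range_succ, mul_comm _ (X - C (c n)), hy]
    · have hcomm : Commute (Ω - algebraMap K _ (c i)) (F ^ j) :=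
        (hΩF.sub_left (Algebra.commute_algebraMap_left _ _)).pow_right j
      have hstep : (Ω - algebraMap K _ (c i)) (x i) ∈ iterateSpan F x i := by
        simpa [Module.algebraMap_end_apply] using hx i
      rw [SetLike.mem_coe, LinearMap.mem_ker, Finset.prod_range_succ, map_mul, map_sub, aeval_X,
        aeval_C, Module.End.mul_apply, ← Module.End.mul_apply _ (F ^ j), hcomm.eq,
        Module.End.mul_apply]
      exact ih (pow_apply_mem_iterateSpan j hstep)

end IterateSpan

section Casimir

variable {K L M : Type*} [Field K] [LieRing L] [LieAlgebra K L] [AddCommGroup M] [Module K M]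
  [LieRingModule L M] [LieModule K L M]

def casimirEigenvalue (μ : K) : K :=
  1 / 2 * μ * (μ + 2)

variable (K M) in
def casimir (e h f : L) : Module.End K M :=
  LieModule.toEnd K L M e * LieModule.toEnd K L M f
    + (1 / 2 : K) • (LieModule.toEnd K L M h * LieModule.toEnd K L M h)
    + LieModule.toEnd K L M f * LieModule.toEnd K L M e

variable {e h f : L}

theorem commute_casimir_toEnd [CharZero K] (hhf : ⁅h, f⁆ = (-2 : K) • f) (hef : ⁅e, f⁆ = h) :
    Commute (casimir K M e h f) (LieModule.toEnd K L M f) := by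
  unfold casimir
  set E := LieModule.toEnd K L M e
  set F := LieModule.toEnd K L M f
  set H := LieModule.toEnd K L M h
  have hEF : E * F - F * E = H := by
    ext y
    simp only [E, F, H, LinearMap.sub_apply, Module.End.mul_apply, LieModule.toEnd_apply_apply]
    rw [← lie_lie, hef]
  have hHF : H * F - F * H = (-2 : K) • F := by
    ext y
    simp only [F, H, LinearMap.sub_apply, LinearMap.smul_apply, Module.End.mul_apply,
      LieModule.toEnd_apply_apply]
    rw [← lie_lie, hhf, smul_lie]
  have hcommutator : (E * F + (1 / 2 : K) • (H * H) + F * E) * F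
        - F * (E * F + (1 / 2 : K) • (H * H) + F * E)
      = (E * F - F * E) * F + F * (E * F - F * E)
        + (1 / 2 : K) • (H * (H * F - F * H) + (H * F - F * H) * H) := by
    simp only [smul_mul_assoc, mul_smul_comm, smul_add, smul_sub, mul_sub, sub_mul, add_mul,
      mul_add, mul_assoc]
    abel
  rw [hEF, hHF, mul_smul_comm, smul_mul_assoc, ← smul_add, smul_smul] at hcommutator
  rw [commute_iff_eq, ← sub_eq_zero, hcommutator]
  module

theorem casimir_apply_of_lie_eq_smul [CharZero K] (hef : ⁅e, f⁆ = h) {μ : K} {y : M}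
    (hy : ⁅h, y⁆ = μ • y) :
    casimir K M e h f y = casimirEigenvalue μ • y + (2 : K) • ⁅f, ⁅e, y⁆⁆ := by
  have hefy : ⁅e, ⁅f, y⁆⁆ = ⁅h, y⁆ + ⁅f, ⁅e, y⁆⁆ := by
    rw [← hef, lie_lie]; abel
  simp only [casimir, casimirEigenvalue, LinearMap.add_apply, LinearMap.smul_apply,
    Module.End.mul_apply, LieModule.toEnd_apply_apply, hefy, hy, lie_smul]
  module

end Casimir

theorem casimirEigenvalue_sub_two_mul_injective {K : Type*} [Field K] [CharZero K] {ν : K}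
    (hν : ∀ m : ℕ, ν ≠ m) :
    Function.Injective fun k : ℕ => casimirEigenvalue (ν - 2 * k) := by
  intro i j hij
  simp only [casimirEigenvalue] at hij
  have hfac : ((j : K) - i) * (ν - ((i + j - 1 : ℕ) : K)) = 0 := by
    rcases Nat.eq_zero_or_pos (i + j) with h0 | hpos
    · obtain ⟨rfl, rfl⟩ : i = 0 ∧ j = 0 := by omega
      simp
    · rw [Nat.cast_sub hpos]
      push_cast
      linear_combination (1 / 2 : K) * hij
  rcases mul_eq_zero.mp hfac with h | h
  · exact_mod_cast (sub_eq_zero.mp h).symm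
  · exact absurd (sub_eq_zero.mp h) (hν _)

section TensorVerma

variable {K L V₁ V₂ : Type*} [Field K] [LieRing L] [LieAlgebra K L]
  [AddCommGroup V₁] [Module K V₁] [LieRingModule L V₁] [LieModule K L V₁]
  [AddCommGroup V₂] [Module K V₂] [LieRingModule L V₂] [LieModule K L V₂]
  {e h f : L} {p : ℕ} {lam : K} {v : ℕ → V₁} {w : ℕ → V₂}

open TensorProduct

theorem lie_tmul_eq_smul_of_add_eq (hvh : ∀ k : ℕ, ⁅h, v k⁆ = ((p : K) - 2 * k) • v k)
    (hwh : ∀ k : ℕ, ⁅h, w k⁆ = (lam - 2 * k) • w k) {a b k : ℕ} (hab : a + b = k) :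
    ⁅h, v a ⊗ₜ[K] w b⁆ = ((p : K) + lam - 2 * k) • (v a ⊗ₜ[K] w b) := by
  rw [LieModule.lie_tmul_right, hvh, hwh, ← smul_tmul', tmul_smul, ← add_smul, ← hab]
  congr 1
  push_cast
  ring

theorem lie_tmul_mem_span_of_add_eq (hve0 : ⁅e, v 0⁆ = 0)
    (hve : ∀ k : ℕ, ⁅e, v (k + 1)⁆ = (((k : K) + 1) * ((p : K) - k)) • v k)
    (hwe0 : ⁅e, w 0⁆ = 0) (hwe : ∀ k : ℕ, ⁅e, w (k + 1)⁆ = (((k : K) + 1) * (lam - k)) • w k)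
    {a b k : ℕ} (hab : a + b = k) :
    ⁅e, v a ⊗ₜ[K] w b⁆
      ∈ Submodule.span K (Set.range fun i : Fin k => v i ⊗ₜ[K] w (k - 1 - i)) := by
  have hmem : ∀ a' b', a' + b' + 1 = k →
      v a' ⊗ₜ[K] w b' ∈ Submodule.span K (Set.range fun i : Fin k => v i ⊗ₜ[K] w (k - 1 - i)) :=
    fun a' b' h => Submodule.subset_span ⟨⟨a', by omega⟩, by simp only; congr 2; omega⟩
  rw [LieModule.lie_tmul_right]
  refine add_mem ?_ ?_
  · rcases a with _ | a
    · simp [hve0]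
    · rw [hve, ← smul_tmul']
      exact Submodule.smul_mem _ _ (hmem a b (by omega))
  · rcases b with _ | b
    · simp [hwe0]
    · rw [hwe, tmul_smul]
      exact Submodule.smul_mem _ _ (hmem a b (by omega))

theorem exists_ne_zero_lie_eq_zero_lie_eq_smul
    (hind₁ : LinearIndependent K fun i : Fin (p + 1) => v i) (hind₂ : LinearIndependent K w)
    (hvh : ∀ k : ℕ, ⁅h, v k⁆ = ((p : K) - 2 * k) • v k)
    (hwh : ∀ k : ℕ, ⁅h, w k⁆ = (lam - 2 * k) • w k) (hve0 : ⁅e, v 0⁆ = 0)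
    (hve : ∀ k : ℕ, ⁅e, v (k + 1)⁆ = (((k : K) + 1) * ((p : K) - k)) • v k)
    (hwe0 : ⁅e, w 0⁆ = 0) (hwe : ∀ k : ℕ, ⁅e, w (k + 1)⁆ = (((k : K) + 1) * (lam - k)) • w k)
    {k : ℕ} (hk : k ≤ p) :
    ∃ y : V₁ ⊗[K] V₂, y ≠ 0 ∧ ⁅e, y⁆ = 0 ∧ ⁅h, y⁆ = ((p : K) + lam - 2 * k) • y := by
  let u : Fin (k + 1) → V₁ ⊗[K] V₂ := fun i => v i ⊗ₜ w (k - i)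
  have hu : LinearIndependent K u :=
    (hind₁.tmul_of_isDomain hind₂).comp
      (fun i : Fin (k + 1) => ((⟨i, i.2.trans_le (by omega)⟩ : Fin (p + 1)), k - (i : ℕ)))
      fun i j hij => Fin.ext (by simpa using congrArg (fun x => (x.1 : ℕ)) hij)
  obtain ⟨y, hy, hy0, hey⟩ := exists_ne_zero_mem_span_apply_eq_zero
    (LieModule.toEnd K L (V₁ ⊗[K] V₂) e) u hu _
    fun i => lie_tmul_mem_span_of_add_eq hve0 hve hwe0 hwe (by omega)
  have hweight : Submodule.span K (Set.range u)
      ≤ (LieModule.toEnd K L (V₁ ⊗[K] V₂) h).eigenspace ((p : K) + lam - 2 * k) := by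
    refine Submodule.span_le.mpr ?_
    rintro _ ⟨i, rfl⟩
    exact Module.End.mem_eigenspace_iff.mpr (lie_tmul_eq_smul_of_add_eq hvh hwh (by omega))
  exact ⟨y, hy0, hey, Module.End.mem_eigenspace_iff.mp (hweight hy)⟩

theorem lie_tmul_zero_mem_iterateSpan (hve0 : ⁅e, v 0⁆ = 0)
    (hve : ∀ k : ℕ, ⁅e, v (k + 1)⁆ = (((k : K) + 1) * ((p : K) - k)) • v k)
    (hwe0 : ⁅e, w 0⁆ = 0) (k : ℕ) :
    ⁅e, v k ⊗ₜ[K] w 0⁆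
      ∈ iterateSpan (LieModule.toEnd K L (V₁ ⊗[K] V₂) f) (fun i => v i ⊗ₜ w 0) k := by
  rw [LieModule.lie_tmul_right, hwe0, tmul_zero, add_zero]
  rcases k with _ | k
  · simp [hve0]
  · rw [hve, ← smul_tmul']
    exact Submodule.smul_mem _ _ (Submodule.subset_span ⟨k, k.lt_succ_self, 0, by simp⟩)

theorem casimir_tmul_zero_sub_smul_mem_iterateSpan [CharZero K] (hef : ⁅e, f⁆ = h)
    (hvh : ∀ k : ℕ, ⁅h, v k⁆ = ((p : K) - 2 * k) • v k)
    (hwh : ∀ k : ℕ, ⁅h, w k⁆ = (lam - 2 * k) • w k) (hve0 : ⁅e, v 0⁆ = 0)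
    (hve : ∀ k : ℕ, ⁅e, v (k + 1)⁆ = (((k : K) + 1) * ((p : K) - k)) • v k)
    (hwe0 : ⁅e, w 0⁆ = 0) (k : ℕ) :
    casimir K (V₁ ⊗[K] V₂) e h f (v k ⊗ₜ w 0)
        - casimirEigenvalue ((p : K) + lam - 2 * k) • (v k ⊗ₜ w 0)
      ∈ iterateSpan (LieModule.toEnd K L (V₁ ⊗[K] V₂) f) (fun i => v i ⊗ₜ w 0) k := by
  rw [casimir_apply_of_lie_eq_smul hef (lie_tmul_eq_smul_of_add_eq hvh hwh (add_zero k)),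
    add_sub_cancel_left]
  refine Submodule.smul_mem _ _ ?_
  simpa using pow_apply_mem_iterateSpan 1 (lie_tmul_zero_mem_iterateSpan hve0 hve hwe0 k)

theorem iterateSpan_tmul_zero_eq_top
    (hspan₁ : Submodule.span K (Set.range fun i : Fin (p + 1) => v i) = ⊤)
    (hspan₂ : Submodule.span K (Set.range w) = ⊤) (hv_top : ∀ k : ℕ, p < k → v k = 0)
    (hvf : ∀ k : ℕ, ⁅f, v k⁆ = v (k + 1)) (hwf : ∀ k : ℕ, ⁅f, w k⁆ = w (k + 1)) :
    iterateSpan (LieModule.toEnd K L (V₁ ⊗[K] V₂) f) (fun i => v i ⊗ₜ w 0) (p + 1) = ⊤ := by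
  set N := iterateSpan (LieModule.toEnd K L (V₁ ⊗[K] V₂) f) (fun i => v i ⊗ₜ w 0) (p + 1)
  have hmem : ∀ j i, v i ⊗ₜ[K] w j ∈ N := by
    intro j
    induction j with
    | zero =>
      intro i
      rcases le_or_gt i p with hi | hi
      · exact Submodule.subset_span ⟨i, by omega, 0, by simp⟩
      · simp [hv_top i hi]
    | succ j ih =>
      intro i
      have hf : v i ⊗ₜ[K] w (j + 1) = ⁅f, v i ⊗ₜ[K] w j⁆ - v (i + 1) ⊗ₜ[K] w j := by
        rw [LieModule.lie_tmul_right, hvf, hwf, add_sub_cancel_left]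
      rw [hf]
      exact sub_mem (by simpa using pow_apply_mem_iterateSpan 1 (ih i)) (ih (i + 1))
  rw [eq_top_iff, ← map₂_mk_top_top_eq_top, ← hspan₁, ← hspan₂, Submodule.map₂_span_span,
    Submodule.span_le]
  rintro _ ⟨_, ⟨i, rfl⟩, _, ⟨j, rfl⟩, rfl⟩
  exact hmem j i

end TensorVerma

theorem sl2_casimir_on_Lp_tensor_verma_general
    {L : Type*} [LieRing L] [LieAlgebra ℂ L]
    (e h f : L)
    (hhf : ⁅h, f⁆ = (-2 : ℂ) • f) (hef : ⁅e, f⁆ = h)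
    (p : ℕ) (lam : ℂ)
    (hplam : ∀ m : ℕ, (p : ℂ) + lam ≠ m)
    {V₁ : Type*} [AddCommGroup V₁] [Module ℂ V₁] [LieRingModule L V₁] [LieModule ℂ L V₁]
    (v : ℕ → V₁)
    (hspan₁ : Submodule.span ℂ (Set.range fun i : Fin (p + 1) => v i) = ⊤)
    (hind₁ : LinearIndependent ℂ fun i : Fin (p + 1) => v i)
    (hv_top : ∀ k : ℕ, p < k → v k = 0)
    (hvh : ∀ k : ℕ, ⁅h, v k⁆ = ((p : ℂ) - 2 * k) • v k)
    (hvf : ∀ k : ℕ, ⁅f, v k⁆ = v (k + 1))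
    (hve0 : ⁅e, v 0⁆ = 0)
    (hve : ∀ k : ℕ, ⁅e, v (k + 1)⁆ = (((k : ℂ) + 1) * ((p : ℂ) - k)) • v k)
    {V₂ : Type*} [AddCommGroup V₂] [Module ℂ V₂] [LieRingModule L V₂] [LieModule ℂ L V₂]
    (w : ℕ → V₂)
    (hspan₂ : Submodule.span ℂ (Set.range w) = ⊤)
    (hind₂ : LinearIndependent ℂ w)
    (hwh : ∀ k : ℕ, ⁅h, w k⁆ = (lam - 2 * k) • w k)
    (hwf : ∀ k : ℕ, ⁅f, w k⁆ = w (k + 1))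
    (hwe0 : ⁅e, w 0⁆ = 0)
    (hwe : ∀ k : ℕ, ⁅e, w (k + 1)⁆ = (((k : ℂ) + 1) * (lam - k)) • w k)
    (Ω : Module.End ℂ (TensorProduct ℂ V₁ V₂))
    (hΩ : Ω = LieModule.toEnd ℂ L (TensorProduct ℂ V₁ V₂) e
              * LieModule.toEnd ℂ L (TensorProduct ℂ V₁ V₂) f
            + (1 / 2 : ℂ) • (LieModule.toEnd ℂ L (TensorProduct ℂ V₁ V₂) h
              * LieModule.toEnd ℂ L (TensorProduct ℂ V₁ V₂) h)
            + LieModule.toEnd ℂ L (TensorProduct ℂ V₁ V₂) f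
              * LieModule.toEnd ℂ L (TensorProduct ℂ V₁ V₂) e) :
    (∀ μ : ℂ, Module.End.HasEigenvalue Ω μ ↔
        ∃ k : ℕ, k ≤ p ∧ μ = (1 / 2 : ℂ) * ((p : ℂ) + lam - 2 * k) * ((p : ℂ) + lam - 2 * k + 2))
      ∧ (⨆ μ : ℂ, Module.End.eigenspace Ω μ) = ⊤ := by
  have hΩ' : Ω = casimir ℂ (TensorProduct ℂ V₁ V₂) e h f := hΩ
  set c : ℕ → ℂ := fun k => casimirEigenvalue ((p : ℂ) + lam - 2 * k)
  have hann : aeval Ω (∏ k ∈ Finset.range (p + 1), (X - C (c k))) = 0 := by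
    refine LinearMap.ker_eq_top.mp (top_le_iff.mp ?_)
    rw [hΩ', ← iterateSpan_tmul_zero_eq_top hspan₁ hspan₂ hv_top hvf hwf]
    exact iterateSpan_le_ker_aeval_prod (commute_casimir_toEnd hhf hef) c
      (casimir_tmul_zero_sub_smul_mem_iterateSpan hef hvh hwh hve0 hve hwe0) (p + 1)
  refine ⟨fun μ => ⟨fun hμ => ?_, ?_⟩, ?_⟩
  · obtain ⟨k, hk, rfl⟩ := hμ.exists_eq_of_aeval_prod_X_sub_C_eq_zero c _ hann
    exact ⟨k, Nat.lt_succ_iff.mp (Finset.mem_range.mp hk), rfl⟩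
  · rintro ⟨k, hk, rfl⟩
    obtain ⟨y, hy0, hey, hhy⟩ :=
      exists_ne_zero_lie_eq_zero_lie_eq_smul hind₁ hind₂ hvh hwh hve0 hve hwe0 hwe hk
    refine Module.End.hasEigenvalue_of_hasEigenvector ⟨Module.End.mem_eigenspace_iff.mpr ?_, hy0⟩
    rw [hΩ', casimir_apply_of_lie_eq_smul hef hhy, hey, lie_zero, smul_zero, add_zero]
    rfl
  · exact Ω.iSup_eigenspace_eq_top_of_aeval_prod_X_sub_C_eq_zero c _
      (casimirEigenvalue_sub_two_mul_injective hplam).injOn hann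

/-- **Theorem 5.4 setup.** Let `p ∈ ℕ` and `λ ∈ ℂ` with `λ ∉ ℕ`, `p + λ ∉ ℕ`.
Let `V₁ = L_p` be the `(p+1)`-dimensional irreducible `𝔰𝔩₂`-module (with standard basis
`v 0, …, v p`) and `V₂ = L_λ` the (irreducible) Verma module of highest weight `λ` (with
standard basis `w 0, w 1, …`).  Then the Casimir operator `ef + ½h² + fe` on `L_p ⊗ L_λ` is
diagonalizable and its eigenvalues are exactly `½(p+λ-2k)(p+λ-2k+2)` for `0 ≤ k ≤ p`,
corresponding to the decomposition `L_p ⊗ L_λ ≅ ⨁_{k=0}^p L_{p+λ-2k}`. -/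
theorem sl2_casimir_on_Lp_tensor_verma
    {L : Type*} [LieRing L] [LieAlgebra ℂ L]
    (e h f : L)
    (hhe : ⁅h, e⁆ = (2 : ℂ) • e) (hhf : ⁅h, f⁆ = (-2 : ℂ) • f) (hef : ⁅e, f⁆ = h)
    (p : ℕ) (lam : ℂ)
    (hlam : ∀ m : ℕ, lam ≠ m) (hplam : ∀ m : ℕ, (p : ℂ) + lam ≠ m)
    {V₁ : Type*} [AddCommGroup V₁] [Module ℂ V₁] [LieRingModule L V₁] [LieModule ℂ L V₁]
    (v : ℕ → V₁)
    (hspan₁ : Submodule.span ℂ (Set.range fun i : Fin (p + 1) => v i) = ⊤)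
    (hind₁ : LinearIndependent ℂ fun i : Fin (p + 1) => v i)
    (hv_top : ∀ k : ℕ, p < k → v k = 0)
    (hvh : ∀ k : ℕ, ⁅h, v k⁆ = ((p : ℂ) - 2 * k) • v k)
    (hvf : ∀ k : ℕ, ⁅f, v k⁆ = v (k + 1))
    (hve0 : ⁅e, v 0⁆ = 0)
    (hve : ∀ k : ℕ, ⁅e, v (k + 1)⁆ = (((k : ℂ) + 1) * ((p : ℂ) - k)) • v k)
    {V₂ : Type*} [AddCommGroup V₂] [Module ℂ V₂] [LieRingModule L V₂] [LieModule ℂ L V₂]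
    (w : ℕ → V₂)
    (hspan₂ : Submodule.span ℂ (Set.range w) = ⊤)
    (hind₂ : LinearIndependent ℂ w)
    (hwh : ∀ k : ℕ, ⁅h, w k⁆ = (lam - 2 * k) • w k)
    (hwf : ∀ k : ℕ, ⁅f, w k⁆ = w (k + 1))
    (hwe0 : ⁅e, w 0⁆ = 0)
    (hwe : ∀ k : ℕ, ⁅e, w (k + 1)⁆ = (((k : ℂ) + 1) * (lam - k)) • w k)
    (Ω : Module.End ℂ (TensorProduct ℂ V₁ V₂))
    (hΩ : Ω = LieModule.toEnd ℂ L (TensorProduct ℂ V₁ V₂) e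
              * LieModule.toEnd ℂ L (TensorProduct ℂ V₁ V₂) f
            + (1 / 2 : ℂ) • (LieModule.toEnd ℂ L (TensorProduct ℂ V₁ V₂) h
              * LieModule.toEnd ℂ L (TensorProduct ℂ V₁ V₂) h)
            + LieModule.toEnd ℂ L (TensorProduct ℂ V₁ V₂) f
              * LieModule.toEnd ℂ L (TensorProduct ℂ V₁ V₂) e) :
    (∀ μ : ℂ, Module.End.HasEigenvalue Ω μ ↔
        ∃ k : ℕ, k ≤ p ∧ μ = (1 / 2 : ℂ) * ((p : ℂ) + lam - 2 * k) * ((p : ℂ) + lam - 2 * k + 2))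
      ∧ (⨆ μ : ℂ, Module.End.eigenspace Ω μ) = ⊤ :=
  sl2_casimir_on_Lp_tensor_verma_general e h f hhf hef p lam hplam v hspan₁ hind₁ hv_top hvh hvf
    hve0 hve w hspan₂ hind₂ hwh hwf hwe0 hwe Ω hΩ
end
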